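/- Let Q ≥ 1 and N ≥ 1 be integers, and for each prime p ≤ Q let Ω_p ⊆ ℤ/pℤ. Suppose Δ > 0 is a constant such that the dual large sieve inequality holds: for all complex numbers β(q,a) indexed by q ≤ Q and residues a mod q with gcd(a,q)=1, we have ∑_{n≤N} |∑_{q≤Q} ∑*_{a mod q} β(q,a) e(an/q)|² ≤ Δ ∑_{q≤Q} ∑*_{a mod q} |β(q,a)|². Assume |Ω_p| < p for all p ≤ Q. Then the sifted set S = {n ≤ N : n mod p ∉ Ω_p for all primes p ≤ Q} satisfies |S| ≤ Δ/H, where H = ∑_{q≤Q, q squarefree} ∏_{p|q} |Ω_p|/(p−|Ω_p|). -/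

import Mathlib

open scoped Classical BigOperators

noncomputable def e (t : ℝ) : ℂ := Complex.exp (2 * Real.pi * Complex.I * t)

/-!
For a prime `p` and a set `S` avoiding `Ω_p`, Parseval on `ℤ/pℤ` together with Cauchy–Schwarz over
the `p - |Ω_p|` residues that `S` can occupy gives the local inequality
`|Ω_p| / (p - |Ω_p|) * |∑_{n ∈ S} w n|² ≤ ∑_{c ≠ 0} |∑_{n ∈ S} w n e(cn/p)|²`.
By the Chinese remainder theorem the reduced fractions modulo `ab` (`a`, `b` coprime) are exactly
the sums `c/a + d/b` of reduced fractions, so applying the local inequalities to twisted weights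
multiplies them to Montgomery's inequality `h(q) |∑ w n|² ≤ ∑*_{a mod q} |∑ w n e(an/q)|²` for
squarefree `q`. With `w = 1`, summing over `q` gives `H |S|² ≤ V := ∑_q ∑*_a |T(q,a)|²` where
`T(q,a) = ∑_{n ∈ S} e(an/q)`. Choosing `β(q,a) = conj T(q,a)` for squarefree `q` makes
`∑_{n ∈ S} ∑_{q,a} β(q,a) e(an/q) = V`, so Cauchy–Schwarz and the dual inequality give
`V² ≤ |S| Δ V`, whence `H |S| ≤ Δ`.
-/

open Finset

local notation "ψ" => ZMod.stdAddChar

lemma e_add (s t : ℝ) : e (s + t) = e s * e t := by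
  simp only [e, Complex.ofReal_add, mul_add, Complex.exp_add]

lemma e_natCast_div_eq_stdAddChar {q : ℕ} [NeZero q] (m : ℕ) :
    e ((m : ℝ) / q) = ψ (m : ZMod q) := by
  rw [ZMod.stdAddChar_apply, ZMod.toCircle_natCast, e]
  push_cast
  ring_nf

lemma norm_sq_sum_le_card_mul {ι : Type*} (s : Finset ι) (f : ι → ℂ) :
    ‖∑ i ∈ s, f i‖ ^ 2 ≤ #s * ∑ i ∈ s, ‖f i‖ ^ 2 :=
  (pow_le_pow_left₀ (norm_nonneg _) (norm_sum_le _ _) 2).trans sq_sum_le_card_mul_sum_sq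

lemma sum_norm_sq_sum_mul_stdAddChar {q : ℕ} [NeZero q] (Φ : ZMod q → ℂ) :
    ∑ c, ‖∑ t, Φ t * ψ (c * t)‖ ^ 2 = q * ∑ t, ‖Φ t‖ ^ 2 := by
  have horth (t s : ZMod q) :
      ∑ c, ψ (c * t) * (starRingEnd ℂ) (ψ (c * s)) = if t = s then (q : ℂ) else 0 := by
    simp_rw [← AddChar.map_neg_eq_conj, ← AddChar.map_add_eq_mul, ← mul_neg, ← mul_add,
      AddChar.sum_mulShift _ (ZMod.isPrimitive_stdAddChar q), add_neg_eq_zero, ZMod.card]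
    split_ifs <;> simp
  apply Complex.ofReal_injective
  push_cast
  calc ∑ c, (‖∑ t, Φ t * ψ (c * t)‖ : ℂ) ^ 2
      = ∑ c, ∑ t, ∑ s, Φ t * (starRingEnd ℂ) (Φ s) * (ψ (c * t) * (starRingEnd ℂ) (ψ (c * s))) := by
        refine sum_congr rfl fun c _ => ?_
        rw [← Complex.mul_conj', map_sum, sum_mul_sum]
        simp only [map_mul]
        exact sum_congr rfl fun t _ => sum_congr rfl fun s _ => by ring
    _ = ∑ t, ∑ s, Φ t * (starRingEnd ℂ) (Φ s) * (if t = s then (q : ℂ) else 0) := by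
        rw [sum_comm]
        refine sum_congr rfl fun t _ => ?_
        rw [sum_comm]
        simp only [← mul_sum, horth]
    _ = q * ∑ t, (‖Φ t‖ : ℂ) ^ 2 := by
        simp [mul_sum, Complex.mul_conj', mul_comm]

theorem local_sieve_inequality {q : ℕ} [NeZero q] (Ω : Finset (ZMod q)) (hΩ : #Ω < q)
    (Φ : ZMod q → ℂ) (hΦ : ∀ t ∈ Ω, Φ t = 0) :
    #Ω / (q - #Ω : ℝ) * ‖∑ t, Φ t‖ ^ 2 ≤ ∑ c ∈ univ.erase 0, ‖∑ t, Φ t * ψ (c * t)‖ ^ 2 := by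
  have hsplit : ∑ c ∈ univ.erase 0, ‖∑ t, Φ t * ψ (c * t)‖ ^ 2
      = q * ∑ t, ‖Φ t‖ ^ 2 - ‖∑ t, Φ t‖ ^ 2 := by
    rw [← sum_norm_sq_sum_mul_stdAddChar, ← add_sum_erase _ _ (mem_univ 0)]
    simp
  have hsupp : ∑ t, Φ t = ∑ t ∈ Ωᶜ, Φ t :=
    (sum_subset (subset_univ _) fun t _ ht => hΦ t (by simpa using ht)).symm
  have hgap : (0 : ℝ) < q - #Ω := by
    rw [sub_pos]
    exact_mod_cast hΩ
  have hCS : ‖∑ t, Φ t‖ ^ 2 ≤ (q - #Ω) * ∑ t, ‖Φ t‖ ^ 2 :=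
    calc ‖∑ t, Φ t‖ ^ 2 ≤ #Ωᶜ * ∑ t ∈ Ωᶜ, ‖Φ t‖ ^ 2 := hsupp ▸ norm_sq_sum_le_card_mul _ _
      _ ≤ (q - #Ω) * ∑ t, ‖Φ t‖ ^ 2 := by
        rw [card_compl, ZMod.card, Nat.cast_sub hΩ.le]
        gcongr
        exact subset_univ _
  rw [hsplit, div_mul_eq_mul_div, div_le_iff₀ hgap]
  nlinarith [mul_le_mul_of_nonneg_left hCS (Nat.cast_nonneg q : (0 : ℝ) ≤ q)]

theorem sifted_local_inequality {p : ℕ} [Fact p.Prime] (Ω : Finset (ZMod p)) (hΩ : #Ω < p)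
    (S : Finset ℕ) (hS : ∀ n ∈ S, (n : ZMod p) ∉ Ω) (w : ℕ → ℂ) :
    #Ω / (p - #Ω : ℝ) * ‖∑ n ∈ S, w n‖ ^ 2
      ≤ ∑ u : (ZMod p)ˣ, ‖∑ n ∈ S, w n * ψ ((u : ZMod p) * (n : ZMod p))‖ ^ 2 := by
  set Φ : ZMod p → ℂ := fun t => ∑ n ∈ S.filter (fun n : ℕ => (n : ZMod p) = t), w n
  have hfiber (c : ZMod p) : ∑ n ∈ S, w n * ψ (c * (n : ZMod p)) = ∑ t, Φ t * ψ (c * t) := by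
    rw [← sum_fiberwise S (fun n : ℕ => (n : ZMod p))]
    refine sum_congr rfl fun t _ => ?_
    rw [sum_mul]
    exact sum_congr rfl fun n hn => by rw [(mem_filter.1 hn).2]
  have hΦ : ∀ t ∈ Ω, Φ t = 0 := fun t ht =>
    sum_eq_zero fun n hn => absurd ((mem_filter.1 hn).2 ▸ ht) (hS n (mem_filter.1 hn).1)
  have hunits (f : ZMod p → ℝ) : ∑ u : (ZMod p)ˣ, f u = ∑ c ∈ univ.erase 0, f c :=
    (Fintype.sum_equiv unitsEquivNeZero _ (fun c => f c.1) fun _ => rfl).trans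
      (sum_subtype _ (by simp) f).symm
  rw [hunits fun c => ‖∑ n ∈ S, w n * ψ (c * (n : ZMod p))‖ ^ 2,
    ← sum_fiberwise S (fun n : ℕ => (n : ZMod p))]
  simpa only [hfiber] using local_sieve_inequality Ω hΩ Φ hΦ

theorem sum_units_mul_of_coprime {M : Type*} [AddCommMonoid M] {m k : ℕ} [NeZero m] [NeZero k]
    (h : m.Coprime k) (F : (ℕ → ℂ) → M) :
    ∑ u : (ZMod (m * k))ˣ, F (fun n => ψ ((u : ZMod (m * k)) * (n : ZMod (m * k))))
      = ∑ c : (ZMod m)ˣ, ∑ d : (ZMod k)ˣ,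
          F (fun n => ψ ((c : ZMod m) * (n : ZMod m)) * ψ ((d : ZMod k) * (n : ZMod k))) := by
  have hlift (c : ZMod m) (d : ZMod k) : (ZMod.chineseRemainder h).symm (c * k, d * m)
      = ((c.val * k + d.val * m : ℕ) : ZMod (m * k)) := by
    rw [RingEquiv.symm_apply_eq]
    ext <;> simp [ZMod.chineseRemainder, -ZMod.natCast_val, ZMod.natCast_zmod_val]
  have hchar (a b n : ℕ) : ψ (((a * k + b * m : ℕ) : ZMod (m * k)) * (n : ZMod (m * k)))
      = ψ ((a : ZMod m) * (n : ZMod m)) * ψ ((b : ZMod k) * (n : ZMod k)) := by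
    simp only [← Nat.cast_mul, ← e_natCast_div_eq_stdAddChar, ← e_add]
    have hm : (m : ℝ) ≠ 0 := Nat.cast_ne_zero.2 (NeZero.ne m)
    have hk : (k : ℝ) ≠ 0 := Nat.cast_ne_zero.2 (NeZero.ne k)
    congr 1
    push_cast
    field_simp
  -- `(c, d)` goes to `c k + d m`, the CRT lift of `(c k, d m)`; its character splits by `hchar`
  -- because `(c k + d m) / (m k) = c / m + d / k`.
  let E : (ZMod m)ˣ × (ZMod k)ˣ ≃ (ZMod (m * k))ˣ :=
    ((Equiv.mulRight (ZMod.unitOfCoprime k h.symm)).prodCongr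
      (Equiv.mulRight (ZMod.unitOfCoprime m h))).trans
      (MulEquiv.prodUnits.symm.trans
        (Units.mapEquiv (ZMod.chineseRemainder h).symm.toMulEquiv)).toEquiv
  rw [← Fintype.sum_prod_type', Fintype.sum_equiv E]
  rintro ⟨c, d⟩
  have hE : (E (c, d) : ZMod (m * k))
      = (ZMod.chineseRemainder h).symm ((c : ZMod m) * k, (d : ZMod k) * m) := rfl
  simp only [hE, hlift, hchar, ZMod.natCast_zmod_val]

noncomputable def reducedSum (S : Finset ℕ) (w : ℕ → ℂ) (q : ℕ) : ℝ :=
  ∑ a ∈ (range q).filter (fun a => Nat.gcd a q = 1), ‖∑ n ∈ S, w n * e (((a * n : ℕ) : ℝ) / q)‖ ^ 2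

theorem reducedSum_eq_sum_units (S : Finset ℕ) (w : ℕ → ℂ) (q : ℕ) [NeZero q] :
    reducedSum S w q = ∑ u : (ZMod q)ˣ, ‖∑ n ∈ S, w n * ψ ((u : ZMod q) * (n : ZMod q))‖ ^ 2 := by
  simp only [reducedSum, e_natCast_div_eq_stdAddChar]
  simp only [Nat.cast_mul]
  refine sum_bij' (fun a ha => ZMod.unitOfCoprime a (mem_filter.1 ha).2)
    (fun u _ => (u : ZMod q).val)
    (fun _ _ => mem_univ _) (fun u _ => ?_) (fun a ha => ?_) (fun u _ => ?_) (fun _ _ => rfl)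
  · exact mem_filter.2 ⟨mem_range.2 (ZMod.val_lt _), ZMod.val_coe_unit_coprime u⟩
  · simpa using ZMod.val_cast_of_lt (mem_range.1 (mem_filter.1 ha).1)
  · ext
    simp

theorem reducedSum_mul_of_coprime (S : Finset ℕ) (w : ℕ → ℂ) {m k : ℕ} [NeZero m] [NeZero k]
    (h : m.Coprime k) :
    reducedSum S w (m * k)
      = ∑ c : (ZMod m)ˣ, reducedSum S (fun n => w n * ψ ((c : ZMod m) * (n : ZMod m))) k := by
  rw [reducedSum_eq_sum_units, sum_units_mul_of_coprime h fun χ => ‖∑ n ∈ S, w n * χ n‖ ^ 2]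
  simp only [reducedSum_eq_sum_units, mul_assoc]

noncomputable def sieveWeight (Ω : (p : ℕ) → Finset (ZMod p)) (q : ℕ) : ℝ :=
  ∏ p ∈ q.primeFactors, ((Ω p).card : ℝ) / ((p : ℝ) - (Ω p).card)

theorem sieveWeight_mul (Ω : (p : ℕ) → Finset (ZMod p)) {a b : ℕ} (h : a.Coprime b) :
    sieveWeight Ω (a * b) = sieveWeight Ω a * sieveWeight Ω b := by
  rw [sieveWeight, h.primeFactors_mul, prod_union h.disjoint_primeFactors, sieveWeight, sieveWeight]

theorem sieveWeight_nonneg (Ω : (p : ℕ) → Finset (ZMod p)) {q : ℕ}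
    (hΩ : ∀ p ∈ q.primeFactors, #(Ω p) < p) : 0 ≤ sieveWeight Ω q :=
  prod_nonneg fun p hp => div_nonneg (Nat.cast_nonneg _)
    (sub_nonneg.2 (by exact_mod_cast (hΩ p hp).le))

theorem sieveWeight_mul_norm_sq_le_reducedSum (Ω : (p : ℕ) → Finset (ZMod p)) (S : Finset ℕ)
    (w : ℕ → ℂ) {q : ℕ} (hq : Squarefree q) (hΩ : ∀ p ∈ q.primeFactors, #(Ω p) < p)
    (hS : ∀ p ∈ q.primeFactors, ∀ n ∈ S, (n : ZMod p) ∉ Ω p) :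
    sieveWeight Ω q * ‖∑ n ∈ S, w n‖ ^ 2 ≤ reducedSum S w q := by
  induction q using Nat.recOnPrimeCoprime generalizing w with
  | zero => exact absurd hq not_squarefree_zero
  | prime_pow p n hp =>
    obtain _ | _ | n := n
    · simp [sieveWeight, reducedSum, e]
    · rw [pow_one] at *
      have : Fact p.Prime := ⟨hp⟩
      rw [sieveWeight, hp.primeFactors, prod_singleton, reducedSum_eq_sum_units]
      simp only [hp.primeFactors, mem_singleton, forall_eq] at hΩ hS
      exact sifted_local_inequality (Ω p) hΩ S hS w
    · exact absurd hq (by simp [Nat.squarefree_pow_iff, hp.ne_one])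
  | coprime a b ha hb hab iha ihb =>
    have : NeZero a := ⟨by omega⟩
    have : NeZero b := ⟨by omega⟩
    have ha' : a.primeFactors ⊆ (a * b).primeFactors := by simp [hab.primeFactors_mul]
    have hb' : b.primeFactors ⊆ (a * b).primeFactors := by simp [hab.primeFactors_mul]
    have hΩb : ∀ p ∈ b.primeFactors, #(Ω p) < p := fun p hp => hΩ p (hb' hp)
    calc sieveWeight Ω (a * b) * ‖∑ n ∈ S, w n‖ ^ 2
        = sieveWeight Ω b * (sieveWeight Ω a * ‖∑ n ∈ S, w n‖ ^ 2) := by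
          rw [sieveWeight_mul Ω hab]
          ring
      _ ≤ sieveWeight Ω b * reducedSum S w a :=
          mul_le_mul_of_nonneg_left
            (iha w hq.of_mul_left (fun p hp => hΩ p (ha' hp)) fun p hp => hS p (ha' hp))
            (sieveWeight_nonneg Ω hΩb)
      _ = ∑ c : (ZMod a)ˣ,
            sieveWeight Ω b * ‖∑ n ∈ S, w n * ψ ((c : ZMod a) * (n : ZMod a))‖ ^ 2 := by
          rw [reducedSum_eq_sum_units, mul_sum]
      _ ≤ ∑ c : (ZMod a)ˣ, reducedSum S (fun n => w n * ψ ((c : ZMod a) * (n : ZMod a))) b :=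
          sum_le_sum fun c _ => ihb _ hq.of_mul_right hΩb fun p hp => hS p (hb' hp)
      _ = reducedSum S w (a * b) := (reducedSum_mul_of_coprime S w hab).symm

theorem sq_le_card_mul_of_sum_eq {ι : Type*} {S I : Finset ι} (hSI : S ⊆ I) (G : ι → ℂ) {V Δ : ℝ}
    (hV : ∑ n ∈ S, G n = V) (hG : ∑ n ∈ I, ‖G n‖ ^ 2 ≤ Δ * V) : V ^ 2 ≤ #S * (Δ * V) :=
  calc V ^ 2 = ‖∑ n ∈ S, G n‖ ^ 2 := by rw [hV, Complex.norm_real, Real.norm_eq_abs, sq_abs]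
    _ ≤ #S * ∑ n ∈ S, ‖G n‖ ^ 2 := norm_sq_sum_le_card_mul S G
    _ ≤ #S * ∑ n ∈ I, ‖G n‖ ^ 2 := by gcongr
    _ ≤ #S * (Δ * V) := by gcongr

noncomputable def dualCoeff (S : Finset ℕ) (q a : ℕ) : ℂ :=
  if Squarefree q then (starRingEnd ℂ) (∑ n ∈ S, e (((a * n : ℕ) : ℝ) / q)) else 0

theorem sum_dualCoeff_mul_e (S Q : Finset ℕ) :
    ∑ n ∈ S, ∑ q ∈ Q, ∑ a ∈ (range q).filter (fun a => Nat.gcd a q = 1),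
        dualCoeff S q a * e (((a * n : ℕ) : ℝ) / q)
      = ((∑ q ∈ Q, ∑ a ∈ (range q).filter (fun a => Nat.gcd a q = 1),
          ‖dualCoeff S q a‖ ^ 2 : ℝ) : ℂ) := by
  have hconj (q a : ℕ) : dualCoeff S q a * ∑ n ∈ S, e (((a * n : ℕ) : ℝ) / q)
      = ((‖dualCoeff S q a‖ ^ 2 : ℝ) : ℂ) := by
    unfold dualCoeff
    split_ifs
    · rw [Complex.conj_mul', Complex.norm_conj]
      norm_cast
    · simp
  simp only [sum_comm (s := S), ← mul_sum, hconj]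
  norm_cast

theorem sum_norm_sq_dualCoeff (S Q : Finset ℕ) :
    ∑ q ∈ Q, ∑ a ∈ (range q).filter (fun a => Nat.gcd a q = 1), ‖dualCoeff S q a‖ ^ 2
      = ∑ q ∈ Q.filter Squarefree, reducedSum S 1 q := by
  rw [sum_filter]
  refine sum_congr rfl fun q _ => ?_
  split_ifs with hq
  · simp only [dualCoeff, if_pos hq, Complex.norm_conj, reducedSum, Pi.one_apply, one_mul]
  · simp [dualCoeff, hq]

lemma mem_Icc_of_mem_primeFactors {q Q p : ℕ} (hq : q ∈ Icc 1 Q) (hp : p ∈ q.primeFactors) :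
    p ∈ Icc 1 Q :=
  mem_Icc.2 ⟨(Nat.prime_of_mem_primeFactors hp).one_le,
    (Nat.le_of_mem_primeFactors hp).trans (mem_Icc.1 hq).2⟩

theorem one_le_sum_sieveWeight (Ω : (p : ℕ) → Finset (ZMod p)) {Q : ℕ} (hQ : 1 ≤ Q)
    (hΩ : ∀ p ∈ Icc 1 Q, p.Prime → #(Ω p) < p) :
    1 ≤ ∑ q ∈ (Icc 1 Q).filter Squarefree, sieveWeight Ω q := by
  have h1 : 1 ∈ (Icc 1 Q).filter Squarefree := mem_filter.2 ⟨mem_Icc.2 ⟨le_rfl, hQ⟩, squarefree_one⟩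
  have hnonneg : ∀ q ∈ (Icc 1 Q).filter Squarefree, 0 ≤ sieveWeight Ω q := fun q hq =>
    sieveWeight_nonneg Ω fun p hp => hΩ p (mem_Icc_of_mem_primeFactors (mem_filter.1 hq).1 hp)
      (Nat.prime_of_mem_primeFactors hp)
  simpa [sieveWeight] using single_le_sum hnonneg h1

theorem sum_sieveWeight_mul_card_sq_le (Ω : (p : ℕ) → Finset (ZMod p)) (S : Finset ℕ) {Q : ℕ}
    (hΩ : ∀ p ∈ Icc 1 Q, p.Prime → #(Ω p) < p)
    (hS : ∀ n ∈ S, ∀ p ∈ Icc 1 Q, p.Prime → (n : ZMod p) ∉ Ω p) :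
    (∑ q ∈ (Icc 1 Q).filter Squarefree, sieveWeight Ω q) * #S ^ 2
      ≤ ∑ q ∈ (Icc 1 Q).filter Squarefree, reducedSum S 1 q := by
  rw [sum_mul]
  refine sum_le_sum fun q hq => ?_
  obtain ⟨hqQ, hsq⟩ := mem_filter.1 hq
  have hfactor {p : ℕ} (hp : p ∈ q.primeFactors) := mem_Icc_of_mem_primeFactors hqQ hp
  simpa using sieveWeight_mul_norm_sq_le_reducedSum Ω S 1 hsq
    (fun p hp => hΩ p (hfactor hp) (Nat.prime_of_mem_primeFactors hp))
    fun p hp n hn => hS n hn p (hfactor hp) (Nat.prime_of_mem_primeFactors hp)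

lemma le_div_of_mul_sq_le {Z H V Δ : ℝ} (hZ : 0 ≤ Z) (hH : 0 < H) (hΔ : 0 < Δ)
    (hlower : H * Z ^ 2 ≤ V) (hupper : V ^ 2 ≤ Z * (Δ * V)) : Z ≤ Δ / H := by
  rw [le_div_iff₀ hH]
  rcases hZ.eq_or_lt with rfl | hZ
  · simpa using hΔ.le
  have hV : 0 < V := lt_of_lt_of_le (by positivity) hlower
  have hVZ : V ≤ Z * Δ := le_of_mul_le_mul_right (by nlinarith) hV
  nlinarith

theorem stmt_0_general (Q N : ℕ) (hQ : 1 ≤ Q)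
    (Ω : (p : ℕ) → Finset (ZMod p)) (Δ : ℝ) (hΔ : 0 < Δ)
    (hdual : ∀ β : ℕ → ℕ → ℂ,
      ∑ n ∈ Finset.Icc 1 N,
        ‖∑ q ∈ Finset.Icc 1 Q, ∑ a ∈ (Finset.range q).filter (fun a => Nat.gcd a q = 1),
          β q a * e (((a * n : ℕ) : ℝ) / q)‖ ^ 2
      ≤ Δ * ∑ q ∈ Finset.Icc 1 Q,
          ∑ a ∈ (Finset.range q).filter (fun a => Nat.gcd a q = 1), ‖β q a‖ ^ 2)
    (hΩ : ∀ p ∈ Finset.Icc 1 Q, p.Prime → (Ω p).card < p) :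
    (((Finset.Icc 1 N).filter
        (fun n => ∀ p ∈ Finset.Icc 1 Q, p.Prime → (n : ZMod p) ∉ Ω p)).card : ℝ)
      ≤ Δ / (∑ q ∈ (Finset.Icc 1 Q).filter Squarefree,
          ∏ p ∈ q.primeFactors, ((Ω p).card : ℝ) / ((p : ℝ) - (Ω p).card)) := by
  set S := (Icc 1 N).filter fun n => ∀ p ∈ Icc 1 Q, p.Prime → (n : ZMod p) ∉ Ω p
  have hSN : S ⊆ Icc 1 N := fun n hn => by
    simp only [S, mem_filter] at hn
    exact hn.1
  have hSΩ : ∀ n ∈ S, ∀ p ∈ Icc 1 Q, p.Prime → (n : ZMod p) ∉ Ω p := fun n hn => by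
    simp only [S, mem_filter] at hn
    exact hn.2
  refine le_div_of_mul_sq_le (Nat.cast_nonneg _)
    (zero_lt_one.trans_le (one_le_sum_sieveWeight Ω hQ hΩ)) hΔ ?_
    (sq_le_card_mul_of_sum_eq hSN _ (sum_dualCoeff_mul_e S _) (hdual (dualCoeff S)))
  rw [sum_norm_sq_dualCoeff]
  exact sum_sieveWeight_mul_card_sq_le Ω S hΩ hSΩ

theorem stmt_0 (Q N : ℕ) (hQ : 1 ≤ Q) (hN : 1 ≤ N)
    (Ω : (p : ℕ) → Finset (ZMod p)) (Δ : ℝ) (hΔ : 0 < Δ)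
    (hdual : ∀ β : ℕ → ℕ → ℂ,
      ∑ n ∈ Finset.Icc 1 N,
        ‖∑ q ∈ Finset.Icc 1 Q, ∑ a ∈ (Finset.range q).filter (fun a => Nat.gcd a q = 1),
          β q a * e (((a * n : ℕ) : ℝ) / q)‖ ^ 2
      ≤ Δ * ∑ q ∈ Finset.Icc 1 Q,
          ∑ a ∈ (Finset.range q).filter (fun a => Nat.gcd a q = 1), ‖β q a‖ ^ 2)
    (hΩ : ∀ p ∈ Finset.Icc 1 Q, p.Prime → (Ω p).card < p) :
    (((Finset.Icc 1 N).filter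
        (fun n => ∀ p ∈ Finset.Icc 1 Q, p.Prime → (n : ZMod p) ∉ Ω p)).card : ℝ)
      ≤ Δ / (∑ q ∈ (Finset.Icc 1 Q).filter Squarefree,
          ∏ p ∈ q.primeFactors, ((Ω p).card : ℝ) / ((p : ℝ) - (Ω p).card)) :=
  stmt_0_general Q N hQ Ω Δ hΔ hdual hΩ
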